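/- arXiv:1603.05676 — 5 statements merged into one kernel-verified Lean document; each statement's English description precedes it below -/
import Mathlib

section
/- Let φ : ẑ → S¹_ℚ be the canonical homomorphism and π₁ : S¹_ℚ → S¹ the first projection. Then the sequence 0 → ẑ → S¹_ℚ → S¹ → 1 is exact: φ is injective, π₁ is surjective, and the range of φ equals the kernel of π₁. Moreover, for every positive integer n, the restriction of φ to the subgroup nẑ is injective with range equal to the kernel of π_n, and π_n is surjective. -/
open Complex Real Filter MeasureTheory

noncomputable section

/-- The profinite completion of `ℤ`: the inverse limit of the groups `ZMod n`
over the divisibility order. -/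
def Zhat : Type :=
  {a : (n : ℕ+) → ZMod n //
    ∀ (n k : ℕ+), ZMod.castHom
        (show ((n : ℕ+) : ℕ) ∣ ((n * k : ℕ+) : ℕ) by
          rw [PNat.mul_coe]; exact dvd_mul_right _ _)
        (ZMod n) (a (n * k)) = a n}

instance (n : ℕ) : TopologicalSpace (ZMod n) := ⊥

instance : TopologicalSpace Zhat := by unfold Zhat; infer_instance

instance : MeasurableSpace Zhat := borel _

instance : Zero Zhat := ⟨⟨fun _ => 0, fun _ _ => map_zero _⟩⟩

instance : Add Zhat :=
  ⟨fun a b => ⟨fun n => a.1 n + b.1 n, fun n k => by rw [map_add, a.2 n k, b.2 n k]⟩⟩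

/-- The canonical inclusion `ℤ → ẑ`. -/
def iotaZ (k : ℤ) : Zhat := ⟨fun n => (k : ZMod n), fun n m => by rw [map_intCast]⟩

/-- Multiplication by a natural number on `ẑ`. -/
def nsmulZ (c : ℕ) (a : Zhat) : Zhat :=
  ⟨fun n => (c : ZMod n) * a.1 n, fun n k => by rw [map_mul, map_natCast, a.2 n k]⟩

lemma exp_real_mul_I_norm (θ : ℝ) : ‖Complex.exp ((θ : ℂ) * Complex.I)‖ = 1 := by
  rw [Complex.norm_exp_ofReal_mul_I]

lemma exp_div_pow (θ : ℝ) (n k : ℕ+) :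
    Complex.exp (((θ / (((n * k : ℕ+) : ℕ)) : ℝ) : ℂ) * Complex.I) ^ ((k : ℕ+) : ℕ)
      = Complex.exp (((θ / ((n : ℕ+) : ℕ) : ℝ) : ℂ) * Complex.I) := by
  rw [← Complex.exp_nat_mul]
  congr 1
  have hn : (((n : ℕ+) : ℕ) : ℂ) ≠ 0 := by exact_mod_cast n.ne_zero
  have hk : (((k : ℕ+) : ℕ) : ℂ) ≠ 0 := by exact_mod_cast k.ne_zero
  rw [PNat.mul_coe]
  push_cast
  field_simp

lemma exp_div_powC (w : ℂ) (n k : ℕ+) :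
    Complex.exp (w / (((n * k : ℕ+) : ℕ) : ℂ)) ^ ((k : ℕ+) : ℕ)
      = Complex.exp (w / (((n : ℕ+) : ℕ) : ℂ)) := by
  rw [← Complex.exp_nat_mul]
  congr 1
  have hn : (((n : ℕ+) : ℕ) : ℂ) ≠ 0 := by exact_mod_cast n.ne_zero
  have hk : (((k : ℕ+) : ℕ) : ℂ) ≠ 0 := by exact_mod_cast k.ne_zero
  rw [PNat.mul_coe]
  push_cast
  field_simp

lemma exp_natCast_congr (n : ℕ+) (A B : ℕ)
    (h : (A : ZMod ((n : ℕ+) : ℕ)) = (B : ZMod ((n : ℕ+) : ℕ))) :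
    Complex.exp (((2 * π * A / ((n : ℕ+) : ℕ) : ℝ) : ℂ) * Complex.I)
      = Complex.exp (((2 * π * B / ((n : ℕ+) : ℕ) : ℝ) : ℂ) * Complex.I) := by
  rw [ZMod.natCast_eq_natCast_iff] at h
  obtain ⟨j, hj⟩ := Nat.modEq_iff_dvd.mp h
  have hn : ((((n : ℕ+) : ℕ) : ℝ)) ≠ 0 := by exact_mod_cast n.ne_zero
  have hB : (B : ℝ) = (A : ℝ) + (((n : ℕ+) : ℕ) : ℝ) * (j : ℝ) := by
    have : (B : ℤ) = (A : ℤ) + (((n : ℕ+) : ℕ) : ℤ) * j := by linarith [hj]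
    exact_mod_cast congrArg (fun t : ℤ => (t : ℝ)) this
  have key : ((2 * π * B / ((n : ℕ+) : ℕ) : ℝ) : ℂ) * Complex.I
      = ((2 * π * A / ((n : ℕ+) : ℕ) : ℝ) : ℂ) * Complex.I + (j : ℂ) * (2 * (π : ℂ) * Complex.I) := by
    have hnC : ((((n : ℕ+) : ℕ) : ℂ)) ≠ 0 := by exact_mod_cast n.ne_zero
    push_cast [hB]
    field_simp
  rw [key, Complex.exp_add, Complex.exp_int_mul_two_pi_mul_I, mul_one]

/-- The component at level `n` of the canonical map `ẑ → S¹_ℚ`,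
`l ↦ e^{2πil/n}`. -/
def phiComp (a : Zhat) (n : ℕ+) : ℂ :=
  Complex.exp (((2 * π * ((a.1 n).val : ℕ) / ((n : ℕ+) : ℕ) : ℝ) : ℂ) * Complex.I)

lemma phiComp_pow (a : Zhat) (n k : ℕ+) : phiComp a (n * k) ^ ((k : ℕ+) : ℕ) = phiComp a n := by
  unfold phiComp
  rw [exp_div_pow]
  haveI : NeZero (((n * k : ℕ+) : ℕ)) := ⟨(n * k).ne_zero⟩
  haveI : NeZero (((n : ℕ+) : ℕ)) := ⟨n.ne_zero⟩
  apply exp_natCast_congr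
  have h := a.2 n k
  rw [ZMod.castHom_apply] at h
  rw [ZMod.natCast_val, ZMod.natCast_val, ZMod.cast_id, h]

/-- The adelic solenoid `S¹_ℚ`: the inverse limit of the circles
`S¹ = {z ∈ ℂ : ‖z‖ = 1}` under the covering maps `z ↦ z^{m/n}` for `n ∣ m`. -/
def SolQ : Type :=
  {z : ℕ+ → ℂ // (∀ n, ‖z n‖ = 1) ∧ ∀ (n k : ℕ+), z (n * k) ^ ((k : ℕ+) : ℕ) = z n}

instance : TopologicalSpace SolQ := by unfold SolQ; infer_instance
instance : MeasurableSpace SolQ := borel _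

instance : Mul SolQ :=
  ⟨fun x y => ⟨fun n => x.1 n * y.1 n,
    ⟨fun n => by rw [norm_mul, x.2.1 n, y.2.1 n, one_mul],
     fun n k => by rw [mul_pow, x.2.2 n k, y.2.2 n k]⟩⟩⟩

instance : One SolQ := ⟨⟨fun _ => 1, ⟨fun _ => norm_one, fun _ _ => one_pow _⟩⟩⟩

/-- The canonical homomorphism `φ : ẑ → S¹_ℚ`, induced componentwise by
`l ↦ e^{2πil/n}`. -/
def phiS (a : Zhat) : SolQ :=
  ⟨fun n => phiComp a n, ⟨fun n => exp_real_mul_I_norm _, phiComp_pow a⟩⟩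

/-- The baseleaf `ν : ℝ → S¹_ℚ`, `ν(t) = (e^{it/n})ₙ`. -/
def nuS (t : ℝ) : SolQ :=
  ⟨fun n => Complex.exp (((t / ((n : ℕ+) : ℕ) : ℝ) : ℂ) * Complex.I),
   ⟨fun n => exp_real_mul_I_norm _, fun n k => exp_div_pow t n k⟩⟩

/-- `exp : ẑ × ℝ → S¹_ℚ`, `exp(a, θ) = φ(a)·ν(θ)`. -/
def expS (p : Zhat × ℝ) : SolQ := phiS p.1 * nuS p.2

/-- The algebraic solenoid `ℂ*_ℚ`: the inverse limit of copies of `ℂ* = ℂ \ {0}`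
under the covering maps `z ↦ z^{m/n}` for `n ∣ m`. -/
def CSolQ : Type :=
  {z : ℕ+ → ℂ // (∀ n, z n ≠ 0) ∧ ∀ (n k : ℕ+), z (n * k) ^ ((k : ℕ+) : ℕ) = z n}

instance : TopologicalSpace CSolQ := by unfold CSolQ; infer_instance
instance : MeasurableSpace CSolQ := borel _

instance : Mul CSolQ :=
  ⟨fun x y => ⟨fun n => x.1 n * y.1 n,
    ⟨fun n => mul_ne_zero (x.2.1 n) (y.2.1 n),
     fun n k => by rw [mul_pow, x.2.2 n k, y.2.2 n k]⟩⟩⟩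

instance : One CSolQ := ⟨⟨fun _ => 1, ⟨fun _ => one_ne_zero, fun _ _ => one_pow _⟩⟩⟩

/-- The canonical homomorphism `φ : ẑ → ℂ*_ℚ`. -/
def phiC (a : Zhat) : CSolQ :=
  ⟨fun n => phiComp a n, ⟨fun n => Complex.exp_ne_zero _, phiComp_pow a⟩⟩

/-- The baseleaf `ν : ℂ → ℂ*_ℚ`, `ν(z) = (e^{iz/n})ₙ`. -/
def nuC (z : ℂ) : CSolQ :=
  ⟨fun n => Complex.exp (Complex.I * z / (((n : ℕ+) : ℕ) : ℂ)),
   ⟨fun n => Complex.exp_ne_zero _, fun n k => exp_div_powC (Complex.I * z) n k⟩⟩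

/-- `exp : ẑ × ℂ → ℂ*_ℚ`, `exp(a, z) = φ(a)·ν(z)`. -/
def expC (a : Zhat) (z : ℂ) : CSolQ := phiC a * nuC z

/-- The `n`-th power map on the Riemann sphere `Ĉ = ℂ ∪ {∞}`, with `∞ ↦ ∞`. -/
def spherePow (k : ℕ) (x : OnePoint ℂ) : OnePoint ℂ :=
  Option.map (fun z : ℂ => z ^ k) x

/-- The adelic Riemann sphere `Ĉ_ℚ`: the inverse limit of Riemann spheres under
the branched covering maps `z ↦ z^{m/n}` for `n ∣ m`. -/
def SphereQ : Type :=
  {z : ℕ+ → OnePoint ℂ // ∀ (n k : ℕ+), spherePow ((k : ℕ+) : ℕ) (z (n * k)) = z n}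

instance : TopologicalSpace SphereQ := by unfold SphereQ; infer_instance

/-- The leaf maps `exp(a, ·) : ℂ → ℂ*_ℚ ⊂ Ĉ_ℚ` of the adelic Riemann sphere. -/
def expSph (a : Zhat) (z : ℂ) : SphereQ :=
  ⟨fun n => OnePoint.some (phiComp a n * Complex.exp (Complex.I * z / (((n : ℕ+) : ℕ) : ℂ))),
   fun n k => by
     show OnePoint.some ((phiComp a (n * k) * _) ^ ((k : ℕ+) : ℕ)) = _
     rw [mul_pow, phiComp_pow, exp_div_powC]⟩

/-- The renormalization operator `I_n` on functions on `ℂ*_ℚ`: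
the average of `μ` over the fiber `π_n⁻¹(π_n(x))`, namely
`I_n(μ)(x) = ∫_{ẑ} μ(φ(n·a)·x) dη(a)`. -/
def Iren (η : Measure Zhat) (n : ℕ+) (f : CSolQ → ℂ) (x : CSolQ) : ℂ :=
  ∫ a : Zhat, f (phiC (nsmulZ ((n : ℕ+) : ℕ) a) * x) ∂η

/-- The renormalization operator `I_n` on functions on `S¹_ℚ`. -/
def IrenS (η : Measure Zhat) (n : ℕ+) (f : SolQ → ℂ) (x : SolQ) : ℂ :=
  ∫ a : Zhat, f (phiS (nsmulZ ((n : ℕ+) : ℕ) a) * x) ∂η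

/-- The character `χ_q = (π_n)^m : S¹_ℚ → S¹` associated to a rational `q = m/n`. -/
def chiQ (q : ℚ) (x : SolQ) : ℂ := (x.1 ⟨q.den, q.den_pos⟩) ^ q.num

/-- A function `f : ℝ → ℂ` is limit periodic if for every `ε > 0` there is a
positive integer `N` such that `|f(x + 2πn) − f(x)| < ε` for all `x ∈ ℝ` and
all integers `n ∈ Nℤ`. -/
def LimitPeriodic (f : ℝ → ℂ) : Prop :=
  ∀ ε : ℝ, 0 < ε → ∃ N : ℕ+, ∀ x : ℝ, ∀ n : ℤ, ((N : ℕ+) : ℤ) ∣ n →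
    ‖f (x + 2 * π * n) - f x‖ < ε

/-- A function `f : ℂ → ℂ` is limit periodic with respect to `x` if for every
`ε > 0` and compact `K ⊆ ℝ` there is a positive integer `N` with
`|f(z + 2πn) − f(z)| < ε` for all `z` with `Im z ∈ K` and all `n ∈ Nℤ`. -/
def LimitPeriodicX (f : ℂ → ℂ) : Prop :=
  ∀ ε : ℝ, 0 < ε → ∀ K : Set ℝ, IsCompact K → ∃ N : ℕ+,
    ∀ z : ℂ, z.im ∈ K → ∀ n : ℤ, ((N : ℕ+) : ℤ) ∣ n →
      ‖f (z + 2 * π * n) - f z‖ < ε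

/-! The level-`n` component of `φ` is the standard character `ZMod n → ℂ`, `j ↦ e^{2πij/n}`,
which is injective with image the `n`-th roots of unity. Hence `φ` is an injective homomorphism,
and a point `x` with `x_n = 1` amounts to a compatible family `(x_{nm})_m` of `m`-th roots of
unity, i.e. to some `a ∈ ẑ` with `φ(n a) = x`. The baseleaf gives surjectivity of `π_n`:
`ν(n θ)_n = e^{iθ}`. -/

lemma ZMod.stdAddChar_cast_of_eq_mul {m N : ℕ} [NeZero m] [NeZero N] {k : ℕ} (hN : N = m * k)
    (j : ZMod N) : ZMod.stdAddChar (j.cast : ZMod m) = ZMod.stdAddChar j ^ k := by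
  subst hN
  obtain ⟨j, rfl⟩ := ZMod.intCast_surjective j
  have hk : (k : ℂ) ≠ 0 := Nat.cast_ne_zero.mpr (right_ne_zero_of_mul (NeZero.ne (m * k)))
  rw [ZMod.cast_intCast (dvd_mul_right m k), ZMod.stdAddChar_coe, ZMod.stdAddChar_coe,
    ← Complex.exp_nat_mul]
  congr 1
  push_cast
  field_simp

lemma ZMod.exists_stdAddChar_eq {n : ℕ} [NeZero n] {w : ℂ} (hw : w ^ n = 1) :
    ∃ j : ZMod n, ZMod.stdAddChar j = w := by
  obtain ⟨i, -, rfl⟩ := (Complex.isPrimitiveRoot_exp n (NeZero.ne n)).eq_pow_of_pow_eq_one hw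
  refine ⟨i, ?_⟩
  rw [← Int.cast_natCast, ZMod.stdAddChar_coe, ← Complex.exp_nat_mul]
  congr 1
  push_cast
  ring

namespace Zhat

@[ext]
lemma ext {a b : Zhat} (h : ∀ n, a.1 n = b.1 n) : a = b :=
  Subtype.ext (funext h)

lemma add_apply (a b : Zhat) (n : ℕ+) : (a + b).1 n = a.1 n + b.1 n := rfl

end Zhat

lemma nsmulZ_apply (c : ℕ) (a : Zhat) (n : ℕ+) : (nsmulZ c a).1 n = c * a.1 n := rfl

lemma nsmulZ_one (a : Zhat) : nsmulZ 1 a = a :=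
  Zhat.ext fun n => by rw [nsmulZ_apply, Nat.cast_one, one_mul]

namespace SolQ

@[ext]
lemma ext {x y : SolQ} (h : ∀ n, x.1 n = y.1 n) : x = y :=
  Subtype.ext (funext h)

lemma mul_apply (x y : SolQ) (n : ℕ+) : (x * y).1 n = x.1 n * y.1 n := rfl

lemma apply_mul_pow (x : SolQ) (n k : ℕ+) : x.1 (n * k) ^ (k : ℕ) = x.1 n := x.2.2 n k

end SolQ

lemma phiS_apply (a : Zhat) (n : ℕ+) : (phiS a).1 n = ZMod.stdAddChar (a.1 n) := by
  rw [ZMod.stdAddChar_apply, ZMod.toCircle_apply]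
  show Complex.exp _ = _
  push_cast
  ring_nf

lemma phiS_add (a b : Zhat) : phiS (a + b) = phiS a * phiS b := by
  ext n
  rw [SolQ.mul_apply, phiS_apply, phiS_apply, phiS_apply, Zhat.add_apply,
    AddChar.map_add_eq_mul]

lemma phiS_injective : Function.Injective phiS := fun a b h => by
  ext n
  apply ZMod.injective_stdAddChar
  rw [← phiS_apply, ← phiS_apply, h]

lemma nuS_apply_of_mul (n : ℕ+) (θ : ℝ) : (nuS (n * θ)).1 n = Complex.exp (θ * Complex.I) := by
  show Complex.exp _ = _
  rw [mul_div_cancel_left₀ θ (by exact_mod_cast n.ne_zero)]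

lemma SolQ.exists_apply_eq (n : ℕ+) {w : ℂ} (hw : ‖w‖ = 1) : ∃ x : SolQ, x.1 n = w :=
  ⟨nuS (n * Complex.arg w), by
    rw [nuS_apply_of_mul]
    simpa only [hw, Complex.ofReal_one, one_mul] using Complex.norm_mul_exp_arg_mul_I w⟩

lemma exists_zhat_stdAddChar_eq {y : ℕ+ → ℂ} (hy : ∀ m : ℕ+, y m ^ (m : ℕ) = 1)
    (hcompat : ∀ m k : ℕ+, y (m * k) ^ (k : ℕ) = y m) :
    ∃ a : Zhat, ∀ m, ZMod.stdAddChar (a.1 m) = y m := by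
  choose c hc using fun m : ℕ+ => ZMod.exists_stdAddChar_eq (hy m)
  refine ⟨⟨c, fun m k => ?_⟩, hc⟩
  apply ZMod.injective_stdAddChar
  rw [ZMod.castHom_apply, ZMod.stdAddChar_cast_of_eq_mul (PNat.mul_coe m k), hc, hc, hcompat]

lemma phiS_nsmulZ_apply_self (n : ℕ+) (a : Zhat) : (phiS (nsmulZ n a)).1 n = 1 := by
  rw [phiS_apply, nsmulZ_apply, ZMod.natCast_self, zero_mul, AddChar.map_zero_eq_one]

lemma exists_phiS_nsmulZ_eq (n : ℕ+) {x : SolQ} (hx : x.1 n = 1) :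
    ∃ a : Zhat, phiS (nsmulZ n a) = x := by
  obtain ⟨a, ha⟩ := exists_zhat_stdAddChar_eq (y := fun m => x.1 (n * m))
    (fun m => by rw [SolQ.apply_mul_pow, hx])
    (fun m k => by rw [← mul_assoc, SolQ.apply_mul_pow])
  refine ⟨a, SolQ.ext fun m => ?_⟩
  rw [phiS_apply, nsmulZ_apply, ← nsmul_eq_mul, AddChar.map_nsmul_eq_pow, ha, mul_comm,
    SolQ.apply_mul_pow]

lemma exists_phiS_nsmulZ_eq_iff (n : ℕ+) (x : SolQ) :
    (∃ a : Zhat, phiS (nsmulZ n a) = x) ↔ x.1 n = 1 :=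
  ⟨fun ⟨a, ha⟩ => ha ▸ phiS_nsmulZ_apply_self n a, exists_phiS_nsmulZ_eq n⟩

/-- The sequence `0 → ẑ → S¹_ℚ → S¹ → 1` is exact: the canonical
homomorphism `φ` is injective, `π₁` is surjective onto the circle, and the range of
`φ` equals the kernel of `π₁`.  Moreover, for every positive integer `n`, the
restriction of `φ` to `nẑ` is injective with range equal to the kernel of `π_n`,
and `π_n` is surjective. -/
theorem statement0 :
    (∀ a b : Zhat, phiS (a + b) = phiS a * phiS b) ∧
    Function.Injective phiS ∧
    (∀ w : ℂ, ‖w‖ = 1 → ∃ x : SolQ, x.1 1 = w) ∧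
    (∀ x : SolQ, (∃ a : Zhat, phiS a = x) ↔ x.1 1 = 1) ∧
    (∀ n : ℕ+,
      (∀ w : ℂ, ‖w‖ = 1 → ∃ x : SolQ, x.1 n = w) ∧
      (∀ a b : Zhat, (∃ a', a = nsmulZ ((n : ℕ+) : ℕ) a') →
        (∃ b', b = nsmulZ ((n : ℕ+) : ℕ) b') → phiS a = phiS b → a = b) ∧
      (∀ x : SolQ,
        (∃ a : Zhat, (∃ a', a = nsmulZ ((n : ℕ+) : ℕ) a') ∧ phiS a = x) ↔ x.1 n = 1)) := by
  refine ⟨phiS_add, phiS_injective, fun w => SolQ.exists_apply_eq 1, fun x => ?_,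
    fun n => ⟨fun w => SolQ.exists_apply_eq n, fun a b _ _ h => phiS_injective h, fun x => ?_⟩⟩
  · simpa only [PNat.one_coe, nsmulZ_one] using exists_phiS_nsmulZ_eq_iff 1 x
  · rw [← exists_phiS_nsmulZ_eq_iff]
    exact ⟨fun ⟨_, ⟨a, ha⟩, hx⟩ => ⟨a, ha ▸ hx⟩, fun ⟨a, hx⟩ => ⟨_, ⟨a, rfl⟩, hx⟩⟩

end
end

section
/- For every a ∈ ẑ, the leaf {φ(a)·ν(t) : t ∈ ℝ} is dense in S¹_ℚ; in particular the image of the baseleaf ν : ℝ → S¹_ℚ is dense. -/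
open Complex Real Filter MeasureTheory

noncomputable section

/-! A basic neighbourhood in `S¹_ℚ` constrains finitely many coordinates `z_i`, and all of them
are determined, through the compatibility `z_{ik}^k = z_i`, by the coordinate at `N = ∏ i`.
Since `t ↦ e^{it/N}` maps `ℝ` onto the circle, every translate `y·ν(ℝ)` of the baseleaf
meets every such neighbourhood. -/

namespace SolQ

lemma coord_eq_of_dvd {x y : SolQ} {n N : ℕ+} (hn : n ∣ N) (hN : y.1 N = x.1 N) :
    y.1 n = x.1 n := by
  obtain ⟨k, rfl⟩ := hn
  rw [← y.2.2 n k, ← x.2.2 n k, hN]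

lemma dense_of_forall_exists_coord_eq {S : Set SolQ}
    (h : ∀ (x : SolQ) (N : ℕ+), ∃ y ∈ S, y.1 N = x.1 N) : Dense S := by
  rw [dense_iff_inter_open]
  rintro U hU ⟨x, hx⟩
  obtain ⟨V, hV, rfl⟩ := isOpen_induced_iff.mp hU
  obtain ⟨I, u, hu, hIV⟩ := isOpen_pi_iff.mp hV x.1 hx
  obtain ⟨y, hyS, hyN⟩ := h x (∏ i ∈ I, i)
  refine ⟨y, hIV fun i hi => ?_, hyS⟩
  rw [coord_eq_of_dvd (Finset.dvd_prod_of_mem (fun i => i) hi) hyN]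
  exact (hu i hi).2

end SolQ

lemma exists_nuS_coord_eq (N : ℕ+) {w : ℂ} (hw : ‖w‖ = 1) : ∃ t : ℝ, (nuS t).1 N = w := by
  refine ⟨((N : ℕ+) : ℕ) * w.arg, ?_⟩
  have hN : ((((N : ℕ+) : ℕ) : ℝ)) ≠ 0 := by exact_mod_cast N.ne_zero
  show Complex.exp (((((N : ℕ+) : ℕ) * w.arg / ((N : ℕ+) : ℕ) : ℝ) : ℂ) * Complex.I) = w
  rw [mul_div_cancel_left₀ _ hN]
  simpa [hw] using Complex.norm_mul_exp_arg_mul_I w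

lemma dense_range_mul_nuS (y : SolQ) : Dense (Set.range fun t : ℝ => y * nuS t) := by
  refine SolQ.dense_of_forall_exists_coord_eq fun x N => ?_
  have hyN : y.1 N ≠ 0 := norm_ne_zero_iff.mp (by rw [y.2.1 N]; exact one_ne_zero)
  obtain ⟨t, ht⟩ := exists_nuS_coord_eq N (w := x.1 N / y.1 N)
    (by rw [norm_div, x.2.1 N, y.2.1 N, div_one])
  exact ⟨y * nuS t, ⟨t, rfl⟩, show y.1 N * (nuS t).1 N = x.1 N by rw [ht, mul_div_cancel₀ _ hyN]⟩

lemma dense_range_nuS : Dense (Set.range nuS) :=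
  SolQ.dense_of_forall_exists_coord_eq fun x N =>
    let ⟨t, ht⟩ := exists_nuS_coord_eq N (x.2.1 N)
    ⟨nuS t, ⟨t, rfl⟩, ht⟩

/-- For every `a ∈ ẑ`, the leaf `{φ(a)·ν(t) : t ∈ ℝ}` is dense in
`S¹_ℚ`; in particular the image of the baseleaf `ν : ℝ → S¹_ℚ` is dense. -/
theorem statement3 :
    (∀ a : Zhat, Dense (Set.range fun t : ℝ => phiS a * nuS t)) ∧
    Dense (Set.range nuS) :=
  ⟨fun a => dense_range_mul_nuS (phiS a), dense_range_nuS⟩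

end
end

section
/- If f : ℝ → ℂ is limit periodic, then the map ℤ → ℂ, n ↦ f(2πn), is uniformly continuous with respect to the profinite (divisibility) uniformity on ℤ — explicitly, for every ε > 0 there is a positive integer N such that N ∣ (n − m) implies |f(2πn) − f(2πm)| < ε — and consequently it extends uniquely to a continuous map ẑ → ℂ. -/
open Complex Real Filter MeasureTheory

noncomputable section

/-! Limit periodicity says exactly that `n ↦ f (2πn)` is uniformly continuous for the profinite
uniformity on `ℤ`. Hence along each filter `comap ι (𝓝 a)`, `a ∈ ẑ`, it is Cauchy and so converges
in `ℂ`; as `ι : ℤ → ẑ` has dense range, these limits form the unique continuous extension. -/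

open Topology

theorem DenseRange.existsUnique_continuous_extension {α X γ : Type*} [TopologicalSpace X]
    [TopologicalSpace γ] [T3Space γ] {i : α → X} (hi : DenseRange i) {F : α → γ}
    (hF : ∀ x, ∃ c, Tendsto F (comap i (𝓝 x)) (𝓝 c)) :
    ∃! g : X → γ, Continuous g ∧ ∀ a, g (i a) = F a := by
  -- `i` is a dense inducing map once `α` carries the topology pulled back along `i`
  let := TopologicalSpace.induced i ‹_›
  have di : IsDenseInducing i := ⟨.induced i, hi⟩
  refine ⟨di.extend F, ⟨di.continuous_extend hF, di.extend_eq' hF⟩, ?_⟩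
  rintro g ⟨hg, hgF⟩
  exact hi.equalizer hg (di.continuous_extend hF)
    (funext fun a => (hgF a).trans (di.extend_eq' hF a).symm)

/-- Uniform continuity for the profinite uniformity on `ℤ`, generated by the entourages
`{(n, m) | N ∣ n - m}`. -/
def ProfiniteUniformContinuous {E : Type*} [SeminormedAddCommGroup E] (F : ℤ → E) : Prop :=
  ∀ ε : ℝ, 0 < ε → ∃ N : ℕ+, ∀ n m : ℤ, ((N : ℕ+) : ℤ) ∣ (n - m) → ‖F n - F m‖ < ε

theorem LimitPeriodic.profiniteUniformContinuous {f : ℝ → ℂ} (hf : LimitPeriodic f) :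
    ProfiniteUniformContinuous fun n : ℤ => f (2 * π * n) := by
  intro ε hε
  obtain ⟨N, hN⟩ := hf ε hε
  refine ⟨N, fun n m hnm => ?_⟩
  have hx : 2 * π * (m : ℝ) + 2 * π * ((n - m : ℤ) : ℝ) = 2 * π * n := by push_cast; ring
  simpa only [hx] using hN (2 * π * m) (n - m) hnm

namespace Zhat

theorem intCast_val_apply_of_dvd (a : Zhat) {m M : ℕ+} (h : m ∣ M) :
    (((a.1 M).val : ℤ) : ZMod m) = a.1 m := by
  obtain ⟨t, rfl⟩ := h
  rw [Int.cast_natCast, ZMod.natCast_val]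
  exact a.2 m t

theorem setOf_apply_eq_mem_nhds (a : Zhat) (N : ℕ+) : {b : Zhat | b.1 N = a.1 N} ∈ 𝓝 a :=
  ((continuous_apply N).comp continuous_subtype_val).continuousAt.preimage_mem_nhds
    (isOpen_discrete {a.1 N} |>.mem_nhds rfl)

end Zhat

theorem denseRange_iotaZ : DenseRange iotaZ := by
  intro a
  rw [_root_.mem_closure_iff]
  rintro _ ⟨O, hO, rfl⟩ haO
  obtain ⟨I, u, hu, hIu⟩ := isOpen_pi_iff.mp hO a.1 haO
  -- an integer agreeing with `a` at the level `∏ I` agrees with it at every level in `I`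
  refine ⟨iotaZ ((a.1 (∏ i ∈ I, i)).val : ℤ), hIu fun i hi => ?_, _, rfl⟩
  have hagree : (iotaZ ((a.1 (∏ i ∈ I, i)).val : ℤ)).1 i = a.1 i :=
    a.intCast_val_apply_of_dvd (Finset.dvd_prod_of_mem _ hi)
  exact hagree ▸ (hu i hi).2

theorem ProfiniteUniformContinuous.exists_tendsto_comap_iotaZ {E : Type*} [SeminormedAddCommGroup E]
    [CompleteSpace E] {F : ℤ → E} (hF : ProfiniteUniformContinuous F) (a : Zhat) :
    ∃ c, Tendsto F (comap iotaZ (𝓝 a)) (𝓝 c) := by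
  have : NeBot (comap iotaZ (𝓝 a)) :=
    comap_neBot_iff_frequently.mpr (mem_closure_iff_frequently.mp (denseRange_iotaZ a))
  suffices Cauchy (map F (comap iotaZ (𝓝 a))) from CompleteSpace.complete this
  refine Metric.cauchy_iff.mpr ⟨inferInstance, fun ε hε => ?_⟩
  obtain ⟨N, hN⟩ := hF ε hε
  refine ⟨F '' {n | (n : ZMod N) = a.1 N},
    image_mem_map (preimage_mem_comap (a.setOf_apply_eq_mem_nhds N)), ?_⟩
  rintro _ ⟨n, hn, rfl⟩ _ ⟨m, hm, rfl⟩
  rw [dist_eq_norm]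
  exact hN n m ((ZMod.intCast_eq_intCast_iff_dvd_sub _ _ _).mp (hm.trans hn.symm))

/-- If `f : ℝ → ℂ` is limit periodic, then `n ↦ f(2πn)` is
uniformly continuous with respect to the profinite (divisibility) uniformity on
`ℤ`, and consequently it extends uniquely to a continuous map `ẑ → ℂ`. -/
theorem statement4 (f : ℝ → ℂ) (hf : LimitPeriodic f) :
    (∀ ε : ℝ, 0 < ε → ∃ N : ℕ+, ∀ n m : ℤ, ((N : ℕ+) : ℤ) ∣ (n - m) →
      ‖f (2 * π * n) - f (2 * π * m)‖ < ε) ∧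
    (∃! g : Zhat → ℂ, Continuous g ∧ ∀ n : ℤ, g (iotaZ n) = f (2 * π * n)) :=
  ⟨hf.profiniteUniformContinuous, DenseRange.existsUnique_continuous_extension denseRange_iotaZ
    hf.profiniteUniformContinuous.exists_tendsto_comap_iotaZ⟩

end
end

section
/- A continuous baseleaf preserving map f : ℂ*_ℚ → ℂ*_ℚ factors through the baseleaf — i.e., there exists a continuous map g : ℂ*_ℚ → ℂ with f = ν ∘ g — if and only if deg(f) = 0. -/
open Complex Real Filter MeasureTheory

noncomputable section

/-!
Write `f (ν z) = ν (q z + h z)`. If `f = ν ∘ g`, then `g (ν z) = q z + h z` by injectivity of `ν`.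
Along `z = 2π m!` the points `ν z` converge to `ν 0` while `h z → h 0` by limit periodicity, so
continuity of `g` forces `q · 2π m! → 0`, i.e. `q = 0`.

Conversely, let `q = 0`. Call `w` a leaf coordinate of `x` at level `N` if `e^{iw/N} = x_N`. Two
leaf coordinates of `x` at level `N` differ by an element of `2πNℤ` and have the same imaginary
part `-log |x_1|`, so by limit periodicity `h(w_m)`, for leaf coordinates `w_m` at level `m!`,
converges to a limit `g x`, uniformly for `log |x_1|` in compact sets; since `ν(w_m) → x`,
continuity of `f` gives `f x = ν (g x)`. Near a point `x₀` with `x₀_n` off the negative real axis,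
leaf coordinates at a fixed level can be chosen as `-i n log x_n + c` with `c` constant, which
is continuous in `x`; being a locally uniform limit of such functions, `g` is continuous.
-/

open Topology

def factorialPNat (m : ℕ) : ℕ+ := ⟨m.factorial, m.factorial_pos⟩

lemma dvd_factorialPNat {n : ℕ+} {m : ℕ} (h : (n : ℕ) ≤ m) : n ∣ factorialPNat m :=
  PNat.dvd_iff.mpr (Nat.dvd_factorial n.pos h)

lemma factorialPNat_dvd_factorialPNat {m m' : ℕ} (h : m ≤ m') :
    factorialPNat m ∣ factorialPNat m' :=
  PNat.dvd_iff.mpr (Nat.factorial_dvd_factorial h)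

lemma eventually_eq_of_pow_eq {X : Type*} [TopologicalSpace X] {φ ψ : X → ℂ} {x₀ : X} {N : ℕ}
    (hN : 0 < N) (hφ : ContinuousAt φ x₀) (hψ : ContinuousAt ψ x₀) (h₀ : φ x₀ = ψ x₀)
    (hψ₀ : ψ x₀ ≠ 0) (hpow : ∀ᶠ x in 𝓝 x₀, φ x ^ N = ψ x ^ N) :
    ∀ᶠ x in 𝓝 x₀, φ x = ψ x := by
  have hρ : Tendsto (fun x => φ x / ψ x) (𝓝 x₀) (𝓝 1) := by
    have := (hφ.div hψ hψ₀).tendsto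
    rwa [Pi.div_apply, h₀, div_self hψ₀] at this
  -- the `N`-th roots of unity other than `1` form a finite, hence closed, set avoiding `1`
  have hS : ((Polynomial.nthRootsFinset N (1 : ℂ) : Set ℂ) \ {1})ᶜ ∈ 𝓝 (1 : ℂ) :=
    ((Finset.finite_toSet _).sdiff.isClosed.isOpen_compl).mem_nhds (by simp)
  filter_upwards [hρ.eventually_mem hS, hpow, hψ.eventually_ne hψ₀] with x hx hxN hx0
  have hroot : φ x / ψ x ∈ Polynomial.nthRootsFinset N (1 : ℂ) := by
    rw [Polynomial.mem_nthRootsFinset hN, div_pow, hxN, div_self (pow_ne_zero _ hx0)]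
  have : φ x / ψ x = 1 := by simpa [hroot] using hx
  exact (div_eq_one_iff_eq hx0).mp this

namespace CSolQ

instance : T2Space CSolQ := by unfold CSolQ; infer_instance

lemma continuous_coord (N : ℕ+) : Continuous fun x : CSolQ => x.1 N :=
  (continuous_apply N).comp continuous_subtype_val

lemma coord_pow (x : CSolQ) (N : ℕ+) : x.1 N ^ (N : ℕ) = x.1 1 := by
  simpa using x.2.2 1 N

lemma coord_eq_of_dvd {x y : CSolQ} {d N : ℕ+} (hd : d ∣ N) (h : x.1 N = y.1 N) :
    x.1 d = y.1 d := by
  obtain ⟨k, rfl⟩ := hd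
  rw [← x.2.2 d k, ← y.2.2 d k, h]

lemma tendsto_of_coord_factorialPNat_eq {u : ℕ → CSolQ} {x : CSolQ}
    (h : ∀ m, (u m).1 (factorialPNat m) = x.1 (factorialPNat m)) :
    Tendsto u atTop (𝓝 x) := by
  refine tendsto_subtype_rng.mpr (tendsto_pi_nhds.mpr fun N => ?_)
  refine tendsto_const_nhds.congr' ?_
  filter_upwards [eventually_ge_atTop (N : ℕ)] with m hm
  exact (coord_eq_of_dvd (dvd_factorialPNat hm) (h m)).symm

lemma exists_coord_mem_slitPlane (x : CSolQ) : ∃ n : ℕ+, x.1 n ∈ slitPlane := by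
  by_contra! hx
  have h2 := hx 2
  rw [mem_slitPlane_iff] at h2
  push Not at h2
  have hre : (x.1 2).re ≠ 0 := fun h0 => x.2.1 2 (Complex.ext h0 h2.2)
  have h1 : x.1 1 = ((x.1 2).re ^ 2 : ℝ) := by
    rw [← coord_pow x 2]
    apply Complex.ext <;> simp [pow_two, h2.2]
  exact hx 1 (h1 ▸ ofReal_mem_slitPlane.mpr (by positivity))

def leafIm (x : CSolQ) : ℝ := -Real.log ‖x.1 1‖

lemma continuous_leafIm : Continuous leafIm :=
  ((continuous_coord 1).norm.log fun x => norm_ne_zero_iff.mpr (x.2.1 1)).neg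

def leafLog (N : ℕ+) (x : CSolQ) : ℂ := -I * N * Complex.log (x.1 N)

lemma continuousAt_leafLog {N : ℕ+} {x₀ : CSolQ} (hx₀ : x₀.1 N ∈ slitPlane) :
    ContinuousAt (leafLog N) x₀ :=
  continuousAt_const.mul ((continuous_coord N).continuousAt.clog hx₀)

end CSolQ

open CSolQ

lemma nuC_coord (w : ℂ) (N : ℕ+) : (nuC w).1 N = Complex.exp (I * w / N) := rfl

lemma nuC_coord_one (w : ℂ) : (nuC w).1 1 = Complex.exp (I * w) := by
  simp [nuC_coord]

lemma continuous_nuC : Continuous nuC := by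
  unfold nuC
  exact Continuous.subtype_mk (continuous_pi fun _ => by fun_prop) _

lemma nuC_leafLog (N : ℕ+) (x : CSolQ) : (nuC (leafLog N x)).1 N = x.1 N := by
  have hN : ((N : ℕ) : ℂ) ≠ 0 := by exact_mod_cast N.ne_zero
  rw [nuC_coord, leafLog, show I * (-I * N * Complex.log (x.1 N)) / N = Complex.log (x.1 N) by
    field_simp; rw [I_sq]; ring, Complex.exp_log (x.2.1 N)]

lemma exists_eq_add_of_nuC_coord_eq {w w' : ℂ} {N : ℕ+} (h : (nuC w).1 N = (nuC w').1 N) :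
    ∃ k : ℤ, w = w' + 2 * π * ((N * k : ℤ) : ℂ) := by
  obtain ⟨k, hk⟩ := Complex.exp_eq_exp_iff_exists_int.mp h
  refine ⟨k, ?_⟩
  have hN : ((N : ℕ) : ℂ) ≠ 0 := by exact_mod_cast N.ne_zero
  field_simp at hk
  push_cast
  linear_combination hk

lemma im_eq_leafIm_of_nuC_coord_eq {w : ℂ} {x : CSolQ} {N : ℕ+} (h : (nuC w).1 N = x.1 N) :
    w.im = leafIm x := by
  have h1 := congrArg norm (coord_eq_of_dvd (one_dvd N) h)
  rw [nuC_coord_one, Complex.norm_exp] at h1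
  simp [leafIm, ← h1]

lemma nuC_injective : Function.Injective nuC := by
  intro w w' h
  obtain ⟨k, hk⟩ := exists_eq_add_of_nuC_coord_eq (congrFun (congrArg Subtype.val h) 1)
  have hdvd (N : ℕ+) : (N : ℤ) ∣ k := by
    obtain ⟨j, hj⟩ := exists_eq_add_of_nuC_coord_eq (congrFun (congrArg Subtype.val h) N)
    have : (k : ℂ) = N * j := by simpa [Real.pi_ne_zero] using hk.symm.trans hj
    exact ⟨j, by exact_mod_cast this⟩
  have hk0 : k = 0 :=
    Int.eq_zero_of_dvd_of_natAbs_lt_natAbs (hdvd ⟨k.natAbs + 1, k.natAbs.succ_pos⟩) (Nat.lt_succ_self _)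
  simpa [hk0] using hk

lemma LimitPeriodicX.exists_norm_sub_lt {h : ℂ → ℂ} (hlp : LimitPeriodicX h) {ε : ℝ} (hε : 0 < ε)
    {K : Set ℝ} (hK : IsCompact K) :
    ∃ N : ℕ+, ∀ L : ℕ+, N ∣ L → ∀ w w' : ℂ, (nuC w).1 L = (nuC w').1 L → w.im ∈ K →
      ‖h w - h w'‖ < ε := by
  obtain ⟨N, hN⟩ := hlp ε hε K hK
  refine ⟨N, fun L hNL w w' hww' hw => ?_⟩
  obtain ⟨k, rfl⟩ := exists_eq_add_of_nuC_coord_eq hww'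
  refine hN w' (by simpa using hw) _ ?_
  exact (Int.natCast_dvd_natCast.mpr (PNat.dvd_iff.mp hNL)).mul_right k

section leafLift

variable {h : ℂ → ℂ}

lemma LimitPeriodicX.exists_norm_sub_lt_of_coord_eq (hlp : LimitPeriodicX h) {ε : ℝ}
    (hε : 0 < ε) {K : Set ℝ} (hK : IsCompact K) :
    ∃ M : ℕ, ∀ m, M ≤ m → ∀ x : CSolQ, leafIm x ∈ K → ∀ w w' : ℂ,
      (nuC w).1 (factorialPNat m) = x.1 (factorialPNat m) →
      (nuC w').1 (factorialPNat m) = x.1 (factorialPNat m) → ‖h w - h w'‖ < ε := by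
  obtain ⟨N, hN⟩ := hlp.exists_norm_sub_lt hε hK
  refine ⟨N, fun m hm x hx w w' hw hw' => ?_⟩
  exact hN _ (dvd_factorialPNat hm) w w' (hw.trans hw'.symm)
    (im_eq_leafIm_of_nuC_coord_eq hw ▸ hx)

variable (h) in
def leafLift (x : CSolQ) : ℂ :=
  limUnder atTop fun m => h (leafLog (factorialPNat m) x)

lemma cauchySeq_leafLog (hlp : LimitPeriodicX h) (x : CSolQ) :
    CauchySeq fun m => h (leafLog (factorialPNat m) x) := by
  refine Metric.cauchySeq_iff'.mpr fun ε hε => ?_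
  obtain ⟨M, hM⟩ := hlp.exists_norm_sub_lt_of_coord_eq hε isCompact_singleton
  refine ⟨M, fun m hm => ?_⟩
  rw [dist_eq_norm]
  exact hM M le_rfl x rfl _ _
    (coord_eq_of_dvd (factorialPNat_dvd_factorialPNat hm) (nuC_leafLog _ x)) (nuC_leafLog _ x)

lemma LimitPeriodicX.exists_norm_leafLift_sub_le (hlp : LimitPeriodicX h) {ε : ℝ} (hε : 0 < ε)
    {K : Set ℝ} (hK : IsCompact K) :
    ∃ M : ℕ, ∀ m, M ≤ m → ∀ x : CSolQ, leafIm x ∈ K → ∀ w : ℂ,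
      (nuC w).1 (factorialPNat m) = x.1 (factorialPNat m) → ‖leafLift h x - h w‖ ≤ ε := by
  obtain ⟨M, hM⟩ := hlp.exists_norm_sub_lt_of_coord_eq hε hK
  refine ⟨M, fun m hm x hx w hw => ?_⟩
  refine le_of_tendsto ((cauchySeq_leafLog hlp x).tendsto_limUnder.sub_const (h w)).norm ?_
  filter_upwards [eventually_ge_atTop m] with j hj
  exact (hM m hm x hx _ w
    (coord_eq_of_dvd (factorialPNat_dvd_factorialPNat hj) (nuC_leafLog _ x)) hw).le

lemma tendsto_leafLift (hlp : LimitPeriodicX h) {x : CSolQ} {w : ℕ → ℂ}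
    (hw : ∀ m, (nuC (w m)).1 (factorialPNat m) = x.1 (factorialPNat m)) :
    Tendsto (fun m => h (w m)) atTop (𝓝 (leafLift h x)) := by
  refine Metric.tendsto_atTop.mpr fun ε hε => ?_
  obtain ⟨M, hM⟩ := hlp.exists_norm_leafLift_sub_le (half_pos hε) isCompact_singleton
  refine ⟨M, fun m hm => ?_⟩
  rw [dist_comm, dist_eq_norm]
  exact (hM m hm x rfl (w m) (hw m)).trans_lt (half_lt_self hε)

lemma nuC_leafLift {f : CSolQ → CSolQ} (hf : Continuous f) (hlp : LimitPeriodicX h)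
    (hfh : ∀ z, f (nuC z) = nuC (h z)) (x : CSolQ) : f x = nuC (leafLift h x) := by
  have hx : Tendsto (fun m => nuC (leafLog (factorialPNat m) x)) atTop (𝓝 x) :=
    tendsto_of_coord_factorialPNat_eq fun m => nuC_leafLog _ x
  refine tendsto_nhds_unique ((hf.tendsto x).comp hx) ?_
  simp only [Function.comp_def, hfh]
  exact (continuous_nuC.tendsto _).comp (tendsto_leafLift hlp fun m => nuC_leafLog _ x)

end leafLift

lemma exists_eventually_nuC_leafLog_add_coord_eq {n : ℕ+} {x₀ : CSolQ}
    (hx₀ : x₀.1 n ∈ slitPlane) (N : ℕ+) :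
    ∃ c : ℂ, ∀ᶠ x in 𝓝 x₀, (nuC (leafLog n x + c)).1 N = x.1 N := by
  set c := leafLog N x₀ - leafLog n x₀
  have hc : Complex.exp (I * c) = 1 := by
    rw [mul_sub, Complex.exp_sub, ← nuC_coord_one, ← nuC_coord_one,
      coord_eq_of_dvd (one_dvd _) (nuC_leafLog N x₀),
      coord_eq_of_dvd (one_dvd _) (nuC_leafLog n x₀), div_self (x₀.2.1 1)]
  -- both sides are `N`-th roots of `x 1` depending continuously on `x`, and they agree at `x₀`
  refine ⟨c, eventually_eq_of_pow_eq N.pos ?_ (continuous_coord N).continuousAt ?_ (x₀.2.1 N)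
    (Eventually.of_forall fun x => ?_)⟩
  · exact (continuous_coord N).continuousAt.comp
      (continuous_nuC.continuousAt.comp ((continuousAt_leafLog hx₀).add continuousAt_const))
  · simp only [c, add_sub_cancel, nuC_leafLog]
  · rw [coord_pow, coord_pow, nuC_coord_one, mul_add, Complex.exp_add, hc, mul_one,
      ← nuC_coord_one, coord_eq_of_dvd (one_dvd n) (nuC_leafLog n x)]

lemma continuous_leafLift {h : ℂ → ℂ} (hh : Continuous h) (hlp : LimitPeriodicX h) :
    Continuous (leafLift h) := by
  refine continuous_iff_continuousAt.mpr fun x₀ =>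
    continuousAt_of_locally_uniform_approx_of_continuousAt fun u hu => ?_
  obtain ⟨ε, hε, hεu⟩ := Metric.mem_uniformity_dist.mp hu
  obtain ⟨n, hn⟩ := exists_coord_mem_slitPlane x₀
  obtain ⟨M, hM⟩ :=
    hlp.exists_norm_leafLift_sub_le (half_pos hε) (isCompact_closedBall (leafIm x₀) 1)
  obtain ⟨c, hc⟩ := exists_eventually_nuC_leafLog_add_coord_eq hn (factorialPNat M)
  have hK : ∀ᶠ x in 𝓝 x₀, leafIm x ∈ Metric.closedBall (leafIm x₀) 1 :=
    continuous_leafIm.continuousAt.eventually_mem (Metric.closedBall_mem_nhds _ one_pos)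
  refine ⟨_, hc.and hK, fun x => h (leafLog n x + c),
    hh.continuousAt.comp ((continuousAt_leafLog hn).add continuousAt_const), fun x hx => hεu ?_⟩
  rw [dist_eq_norm]
  exact (hM M le_rfl x hx.2 _ hx.1).trans_lt (half_lt_self hε)

lemma eq_zero_of_continuousAt_of_comp_nuC {h : ℂ → ℂ} (hlp : LimitPeriodicX h) {g : CSolQ → ℂ}
    (hg : ContinuousAt g (nuC 0)) {q : ℂ} (hgh : ∀ z, g (nuC z) = q * z + h z) : q = 0 := by
  set w : ℕ → ℂ := fun m => 2 * π * (m.factorial : ℂ)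
  have hw (m : ℕ) : (nuC (w m)).1 (factorialPNat m) = (nuC 0).1 (factorialPNat m) := by
    have hm : (m.factorial : ℂ) ≠ 0 := by exact_mod_cast m.factorial_ne_zero
    rw [nuC_coord, nuC_coord, mul_zero, zero_div, Complex.exp_zero,
      show I * w m / ((factorialPNat m : ℕ) : ℂ) = 2 * π * I by simp [w, factorialPNat]; field_simp,
      Complex.exp_two_pi_mul_I]
  have hgw : Tendsto (fun m => g (nuC (w m))) atTop (𝓝 (g (nuC 0))) :=
    hg.tendsto.comp (tendsto_of_coord_factorialPNat_eq hw)
  have hhw : Tendsto (fun m => h (w m)) atTop (𝓝 (h 0)) := by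
    rw [tendsto_nhds_unique tendsto_const_nhds (tendsto_leafLift hlp (w := fun _ => 0) fun _ => rfl)]
    exact tendsto_leafLift hlp hw
  have hqw : Tendsto (fun m => ‖q * w m‖) atTop (𝓝 0) := by
    simpa [hgh] using (hgw.sub hhw).norm
  have hle (m : ℕ) : ‖q‖ * (2 * π) ≤ ‖q * w m‖ := by
    have hm : (1 : ℝ) ≤ m.factorial := by exact_mod_cast m.factorial_pos
    rw [norm_mul]
    gcongr
    simp only [w, norm_mul, Complex.norm_ofNat, Complex.norm_real, Real.norm_eq_abs,
      abs_of_pos Real.pi_pos, Complex.norm_natCast]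
    nlinarith [Real.pi_pos]
  have := ge_of_tendsto' hqw hle
  exact norm_eq_zero.mp (le_antisymm (by nlinarith [Real.pi_pos, norm_nonneg q]) (norm_nonneg q))

/-- A continuous baseleaf preserving map `f : ℂ*_ℚ → ℂ*_ℚ`
(with degree `q` witnessed by its decomposition `f(ν z) = ν(qz + h z)`) factors
through the baseleaf — there is a continuous `g : ℂ*_ℚ → ℂ` with `f = ν ∘ g` —
iff `deg f = 0`. -/
theorem statement12 (f : CSolQ → CSolQ) (hf : Continuous f)
    (q : ℚ) (h : ℂ → ℂ) (hc : Continuous h) (hlp : LimitPeriodicX h)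
    (hdec : ∀ z : ℂ, f (nuC z) = nuC ((q : ℂ) * z + h z)) :
    (∃ g : CSolQ → ℂ, Continuous g ∧ ∀ x : CSolQ, f x = nuC (g x)) ↔ q = 0 := by
  constructor
  · rintro ⟨g, hg, hfg⟩
    have hgh : ∀ z, g (nuC z) = q * z + h z := fun z => nuC_injective (by rw [← hfg, hdec])
    exact_mod_cast eq_zero_of_continuousAt_of_comp_nuC hlp hg.continuousAt hgh
  · rintro rfl
    have hfh : ∀ z, f (nuC z) = nuC (h z) := by simpa using hdec
    exact ⟨leafLift h, continuous_leafLift hc hlp, nuC_leafLift hf hlp hfh⟩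
end
end

section
/- Every continuous function f : Ĉ_ℚ → ℂ on the adelic Riemann sphere that is leafwise holomorphic on ℂ*_ℚ (i.e., for every a ∈ ẑ the map z ↦ f(exp(a, z)) is an entire function ℂ → ℂ) is constant; that is, the ring of holomorphic functions on Ĉ_ℚ is exactly the constants ℂ. -/
open Complex Real Filter MeasureTheory

noncomputable section

/-!
By compactness of `Ĉ_ℚ`, `f` is bounded, so by Liouville it is constant along a leaf
`exp(a, ·)`. Every leaf is dense in `Ĉ_ℚ`: a neighbourhood of a point only constrains one
coordinate `N` (the coordinates are compatible along divisibility), and at that coordinate the leaf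
is `z ↦ φ(a)_N e^{iz/N}`, whose image `ℂ*` is dense in `Ĉ`. By continuity `f` is constant.
-/

open scoped Topology

lemma continuous_spherePow {k : ℕ} (hk : k ≠ 0) : Continuous (spherePow k) := by
  refine OnePoint.continuous_map (continuous_pow k) ?_
  rw [coclosedCompact_eq_cocompact, ← Metric.cobounded_eq_cocompact]
  exact tendsto_pow_cobounded_cobounded hk

lemma isClosed_setOf_spherePow_compatible :
    IsClosed {z : ℕ+ → OnePoint ℂ | ∀ n k : ℕ+, spherePow k (z (n * k)) = z n} := by
  simp only [Set.ofPred_forall]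
  exact isClosed_iInter fun n => isClosed_iInter fun k =>
    isClosed_eq ((continuous_spherePow k.ne_zero).comp (continuous_apply _)) (continuous_apply _)

instance : CompactSpace SphereQ :=
  isCompact_iff_compactSpace.mp isClosed_setOf_spherePow_compatible.isCompact

namespace SphereQ

def proj (n : ℕ+) (x : SphereQ) : OnePoint ℂ := x.1 n

lemma spherePow_proj_mul (n k : ℕ+) (x : SphereQ) : spherePow k (proj (n * k) x) = proj n x :=
  x.2 n k

lemma nhds_eq_iInf_comap_proj (x : SphereQ) :
    𝓝 x = ⨅ n, comap (proj n) (𝓝 (proj n x)) := by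
  rw [show 𝓝 x = comap Subtype.val (𝓝 x.1) from nhds_subtype _ x, nhds_pi, Filter.pi, comap_iInf]
  simp only [comap_comap]
  rfl

lemma comap_proj_mul_le (x : SphereQ) (n k : ℕ+) :
    comap (proj (n * k)) (𝓝 (proj (n * k) x)) ≤ comap (proj n) (𝓝 (proj n x)) := by
  have hproj : proj n = spherePow k ∘ proj (n * k) := (funext (spherePow_proj_mul n k)).symm
  rw [hproj, ← comap_comap]
  exact comap_mono ((continuous_spherePow k.ne_zero).tendsto _).le_comap

/-- The levels `n` are directed by divisibility, so a neighbourhood constraining finitely many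
coordinates is already a neighbourhood for the single coordinate at their product. -/
lemma mem_nhds_iff_exists_proj {x : SphereQ} {s : Set SphereQ} :
    s ∈ 𝓝 x ↔ ∃ n, s ∈ comap (proj n) (𝓝 (proj n x)) := by
  rw [nhds_eq_iInf_comap_proj]
  refine mem_iInf_of_directed (fun m n => ⟨m * n, ?_, ?_⟩) s
  · exact comap_proj_mul_le x m n
  · rw [mul_comm]; exact comap_proj_mul_le x n m

end SphereQ

lemma denseRange_proj_expSph (a : Zhat) (n : ℕ+) :
    DenseRange fun z : ℂ => SphereQ.proj n (expSph a z) := by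
  have hexp : DenseRange fun z : ℂ => Complex.exp (Complex.I * z / (n : ℕ)) := by
    have hn : ((n : ℕ) : ℂ) ≠ 0 := by exact_mod_cast n.ne_zero
    refine DenseRange.comp (g := Complex.exp) ?_ ?_ Complex.continuous_exp
    · rw [DenseRange, Complex.range_exp]; exact dense_compl_singleton 0
    · refine Function.Surjective.denseRange fun w => ⟨-Complex.I * n * w, ?_⟩
      rw [div_eq_iff hn]
      linear_combination (-(n : ℕ) * w : ℂ) * Complex.I_sq
  have hmul := (Homeomorph.mulLeft₀ (phiComp a n) (Complex.exp_ne_zero _)).surjective.denseRange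
  exact OnePoint.denseRange_coe.comp (hmul.comp hexp (continuous_const_mul _)) OnePoint.continuous_coe

theorem denseRange_expSph (a : Zhat) : DenseRange (expSph a) := by
  refine fun x => mem_closure_iff_nhds.mpr fun s hs => ?_
  obtain ⟨n, hn⟩ := SphereQ.mem_nhds_iff_exists_proj.mp hs
  obtain ⟨V, hV, hVs⟩ := mem_comap.mp hn
  obtain ⟨z, hz⟩ := (denseRange_proj_expSph a n).mem_nhds hV
  exact ⟨expSph a z, hVs hz, z, rfl⟩

/-- Every continuous function `f : Ĉ_ℚ → ℂ` on the adelic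
Riemann sphere that is leafwise holomorphic on `ℂ*_ℚ` is constant: the ring of
holomorphic functions on `Ĉ_ℚ` is exactly `ℂ`. -/
theorem statement14 (f : SphereQ → ℂ) (hf : Continuous f)
    (hol : ∀ a : Zhat, Differentiable ℂ fun z : ℂ => f (expSph a z)) :
    ∃ c : ℂ, ∀ x : SphereQ, f x = c := by
  have hbdd : Bornology.IsBounded (Set.range fun z => f (expSph 0 z)) :=
    (isCompact_range hf).isBounded.subset (Set.range_comp_subset_range _ f)
  have hleaf : f ∘ expSph 0 = fun _ => f (expSph 0 0) :=
    funext fun z => (hol 0).apply_eq_apply_of_bounded hbdd z 0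
  exact ⟨f (expSph 0 0), congrFun ((denseRange_expSph 0).equalizer hf continuous_const hleaf)⟩

end
end
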